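/- Suppose k = q₁·q₂ is a product of two distinct primes, n ≥ 4.81·10^9, gcd(n, q₁) = 1 and q₂ ∣ n. If R_{q₁}(n) > log 2 + θ(n, q₂, n), where R_{q₁}(n) = ∑_{p < n, gcd(n−p, q₁)=1} μ(n−p)² log p and θ(n, q₂, n) = ∑_{p ≤ n, p ≡ n mod q₂} log p, then there exists a prime p with 2 < p < n such that n − p is square-free and coprime to k. -/

import Mathlib

open ArithmeticFunction Finset

noncomputable def Rq (n q : ℕ) : ℝ :=
  ∑ p ∈ (Finset.range n).filter (fun p => Nat.Prime p ∧ Nat.gcd (n - p) q = 1),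
    ((ArithmeticFunction.moebius (n - p) : ℝ))^2 * Real.log p

noncomputable def theta' (x q a : ℕ) : ℝ :=
  ∑ p ∈ (Finset.range (x + 1)).filter (fun p => Nat.Prime p ∧ p % q = a % q), Real.log p

theorem stmt_15 (k q₁ q₂ n : ℕ) (hq₁ : q₁.Prime) (hq₂ : q₂.Prime) (hne : q₁ ≠ q₂)
    (hk : k = q₁ * q₂) (hn : (4.81e9 : ℝ) ≤ n)
    (hcop : Nat.Coprime n q₁) (hdvd : q₂ ∣ n)
    (hR : Rq n q₁ > Real.log 2 + theta' n q₂ n) :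
    ∃ p : ℕ, p.Prime ∧ 2 < p ∧ p < n ∧ Squarefree (n - p) ∧ Nat.Coprime (n - p) k := by
  by_contra hcon
  push_neg at hcon
  set S := (Finset.range n).filter (fun p => Nat.Prime p ∧ Nat.gcd (n - p) q₁ = 1) with hS
  have key : ∀ p ∈ S, ((ArithmeticFunction.moebius (n - p) : ℝ))^2 * Real.log p ≤
      (if p = 2 then Real.log 2 else 0) +
      (if p ≠ 2 ∧ q₂ ∣ (n - p) then Real.log p else 0) := by
    intro p hp
    simp only [hS, Finset.mem_filter, Finset.mem_range] at hp
    obtain ⟨hpn, hpp, hgcd⟩ := hp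
    have hlogp : 0 ≤ Real.log p := Real.log_nonneg (by exact_mod_cast hpp.one_lt.le)
    have hmu : ((ArithmeticFunction.moebius (n - p) : ℝ))^2 = if Squarefree (n - p) then 1 else 0 := by
      rw [← Int.cast_pow, moebius_sq]; split_ifs <;> simp
    have h2 : (0:ℝ) ≤ if p ≠ 2 ∧ q₂ ∣ (n - p) then Real.log p else 0 := by
      split_ifs <;> simp [hlogp]
    by_cases hsf : Squarefree (n - p)
    · rw [hmu, if_pos hsf, one_mul]
      by_cases hp2 : p = 2
      · subst hp2
        rw [if_pos rfl, show ((2:ℕ):ℝ) = 2 by norm_num]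
        exact le_add_of_nonneg_right h2
      · have h2lt : 2 < p := lt_of_le_of_ne hpp.two_le (Ne.symm hp2)
        have hnk : ¬ Nat.Coprime (n - p) k := hcon p hpp h2lt hpn hsf
        have hq2dvd : q₂ ∣ n - p := by
          rw [hk, Nat.coprime_mul_iff_right] at hnk
          rcases (Nat.coprime_or_dvd_of_prime hq₂ (n - p)) with h | h
          · exact absurd ⟨hgcd, h.symm⟩ hnk
          · exact h
        rw [if_neg hp2, if_pos ⟨hp2, hq2dvd⟩, zero_add]
    · rw [hmu, if_neg hsf, zero_mul]
      have h1 : (0:ℝ) ≤ if p = 2 then Real.log 2 else 0 := by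
        split_ifs
        · exact Real.log_nonneg one_le_two
        · exact le_refl 0
      linarith
  have hsum : Rq n q₁ ≤ (∑ p ∈ S, if p = 2 then Real.log 2 else 0) +
      (∑ p ∈ S, if p ≠ 2 ∧ q₂ ∣ (n - p) then Real.log p else 0) := by
    rw [Rq, ← hS, ← Finset.sum_add_distrib]
    exact Finset.sum_le_sum key
  have h1 : (∑ p ∈ S, if p = 2 then Real.log 2 else 0) ≤ Real.log 2 := by
    rw [Finset.sum_ite_eq' S 2 (fun _ => Real.log 2)]
    split_ifs <;> simp [Real.log_nonneg one_le_two]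
  have h2 : (∑ p ∈ S, if p ≠ 2 ∧ q₂ ∣ (n - p) then Real.log p else 0) ≤ theta' n q₂ n := by
    rw [← Finset.sum_filter, theta']
    apply Finset.sum_le_sum_of_subset_of_nonneg
    · intro p hp
      simp only [hS, Finset.mem_filter, Finset.mem_range] at hp ⊢
      obtain ⟨⟨hpn, hpp, _⟩, _, hq2⟩ := hp
      refine ⟨Nat.lt_succ_of_lt hpn, hpp, ?_⟩
      have hq2p : q₂ ∣ p := by
        have heq : n = (n - p) + p := (Nat.sub_add_cancel hpn.le).symm
        have hnp : q₂ ∣ (n - p) + p := heq ▸ hdvd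
        exact (Nat.dvd_add_right hq2).mp hnp
      obtain ⟨c, hc⟩ := hq2p
      obtain ⟨d, hd⟩ := hdvd
      rw [hc, hd, Nat.mul_mod_right, Nat.mul_mod_right]
    · intro p hp _
      simp only [Finset.mem_filter, Finset.mem_range] at hp
      exact Real.log_nonneg (by exact_mod_cast hp.2.1.one_lt.le)
  linarith
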